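/- Subcapture strengthening: let Γ = Γ₁ ++ Δ ++ Γ₂ be a context and Γ' = Γ₁ ++ Γ₂, where Γ' is well-formed in the sense that no capture set declared in Γ' mentions a variable bound in Δ. If Γ ⊢ C₁ <: C₂, then Γ' ⊢ (C₁ \ dom(Δ)) <: (C₂ \ dom(Δ)). -/

import Mathlib

/-- A typing context: a list of bindings `x : C` with distinct variables. -/
abbrev Ctx := List (ℕ × Finset ℕ)

/-- The domain of a context: the finite set of variables it binds. -/
def Ctx.dom (Γ : Ctx) : Finset ℕ := (Γ.map Prod.fst).toFinset

/-- The subcapturing relation over list contexts; `sc_var` uses membership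
of a binding `x : C` in the context. Note that `sc_set` in particular derives
`Γ ⊢ ∅ <: C` for any `C`. -/
inductive Subcapt (Γ : Ctx) : Finset ℕ → Finset ℕ → Prop where
  | sc_trans {C₁ C C₂ : Finset ℕ} :
      Subcapt Γ C₁ C → Subcapt Γ C C₂ → Subcapt Γ C₁ C₂
  | sc_elem {x : ℕ} {C : Finset ℕ} :
      x ∈ C → Subcapt Γ {x} C
  | sc_set {C₁ C₂ : Finset ℕ} :
      (∀ x ∈ C₁, Subcapt Γ {x} C₂) → Subcapt Γ C₁ C₂
  | sc_var {x : ℕ} {C : Finset ℕ} :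
      (x, C) ∈ Γ → Subcapt Γ {x} C

/-!
Induction on the derivation. Every rule is stable under removing `dom Δ` from both sides: a
singleton `{x}` with `x ∈ dom Δ` becomes `∅`, which is below everything by `sc_set`; otherwise
an `sc_var` step uses a binding of `Γ₁ ++ Γ₂`, whose capture set avoids `dom Δ` by
well-formedness and so is unchanged.
-/

theorem Ctx.mem_dom_of_mem {Γ : Ctx} {x : ℕ} {C : Finset ℕ} (h : (x, C) ∈ Γ) : x ∈ Γ.dom :=
  List.mem_toFinset.mpr (List.mem_map_of_mem (f := Prod.fst) h)

theorem Ctx.mem_append_of_mem_of_notMem_dom {Γ₁ Δ Γ₂ : Ctx} {x : ℕ} {C : Finset ℕ}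
    (h : (x, C) ∈ Γ₁ ++ Δ ++ Γ₂) (hx : x ∉ Δ.dom) : (x, C) ∈ Γ₁ ++ Γ₂ := by
  have hΔ : (x, C) ∉ Δ := fun hΔ => hx (Ctx.mem_dom_of_mem hΔ)
  simp only [List.mem_append] at h ⊢
  tauto

namespace Subcapt

variable {Γ : Ctx}

theorem empty_left (C : Finset ℕ) : Subcapt Γ ∅ C :=
  sc_set fun _ hx => absurd hx (Finset.notMem_empty _)

theorem singleton_sdiff {x : ℕ} {C D : Finset ℕ} (h : x ∉ D → Subcapt Γ {x} C) :
    Subcapt Γ ({x} \ D) C := by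
  by_cases hx : x ∈ D
  · rw [Finset.sdiff_eq_empty_iff_subset.mpr (Finset.singleton_subset_iff.mpr hx)]
    exact empty_left C
  · rw [Finset.sdiff_eq_self_of_disjoint (Finset.disjoint_singleton_left.mpr hx)]
    exact h hx

end Subcapt

theorem subcapt_strengthening_general (Γ₁ Δ Γ₂ : Ctx) {C₁ C₂ : Finset ℕ}
    (hwf : ∀ p ∈ Γ₁ ++ Γ₂, ∀ y ∈ p.2, y ∉ Ctx.dom Δ)
    (h : Subcapt (Γ₁ ++ Δ ++ Γ₂) C₁ C₂) :
    Subcapt (Γ₁ ++ Γ₂) (C₁ \ Ctx.dom Δ) (C₂ \ Ctx.dom Δ) := by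
  induction h with
  | sc_trans _ _ ih₁ ih₂ => exact .sc_trans ih₁ ih₂
  | sc_elem hx =>
    exact Subcapt.singleton_sdiff fun hxΔ => .sc_elem (Finset.mem_sdiff.mpr ⟨hx, hxΔ⟩)
  | sc_set _ ih =>
    refine .sc_set fun y hy => ?_
    obtain ⟨hyC, hyΔ⟩ := Finset.mem_sdiff.mp hy
    have := ih y hyC
    rwa [Finset.sdiff_eq_self_of_disjoint (Finset.disjoint_singleton_left.mpr hyΔ)] at this
  | @sc_var x C hmem =>
    refine Subcapt.singleton_sdiff fun hxΔ => ?_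
    have hmem' := Ctx.mem_append_of_mem_of_notMem_dom hmem hxΔ
    have hC : C \ Δ.dom = C :=
      Finset.sdiff_eq_self_of_disjoint (Finset.disjoint_left.mpr (hwf _ hmem'))
    rw [hC]
    exact .sc_var hmem'

theorem subcapt_strengthening (Γ₁ Δ Γ₂ : Ctx) {C₁ C₂ : Finset ℕ}
    (hdistinct : (((Γ₁ ++ Δ ++ Γ₂).map Prod.fst)).Nodup)
    (hwf : ∀ p ∈ Γ₁ ++ Γ₂, ∀ y ∈ p.2, y ∉ Ctx.dom Δ)
    (h : Subcapt (Γ₁ ++ Δ ++ Γ₂) C₁ C₂) :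
    Subcapt (Γ₁ ++ Γ₂) (C₁ \ Ctx.dom Δ) (C₂ \ Ctx.dom Δ) :=
  subcapt_strengthening_general Γ₁ Δ Γ₂ hwf h
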